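/- arXiv:1807.02190 — 2 statements merged into one kernel-verified Lean document; each statement's English description precedes it below -/
import Mathlib

section
/- Define C_{j_2 j_1} = ∫_t^T φ_{j_2}(y) ∫_t^y φ_{j_1}(x) dx dy for nonnegative integers j_1, j_2. Then C_{00} = Δ/2; for every integer j ≥ 1, C_{j, j−1} = Δ/(2√(4j²−1)) and C_{j−1, j} = −Δ/(2√(4j²−1)); and C_{j_2 j_1} = 0 in all remaining cases, i.e. whenever |j_1 − j_2| ≥ 2 or j_1 = j_2 ≥ 1. -/
open MeasureTheory

/-- The `n`-th Legendre polynomial, given by Rodrigues' formula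
`P_n(x) = (1/(2^n n!)) (d/dx)^n (x²−1)^n`. -/
noncomputable def legendreP (n : ℕ) (x : ℝ) : ℝ :=
  (1 / ((2 : ℝ) ^ n * (Nat.factorial n))) * iteratedDeriv n (fun y => (y ^ 2 - 1) ^ n) x

/-!
After the affine substitution `u = (2(x - t) - Δ)/Δ` onto `[-1, 1]`, `C_{mn}` becomes
`Δ/4 · √((2m+1)(2n+1)) · A_{mn}` with `A_{mn} = ∫_{-1}^1 P_m Q_n`, where `Q_n` is the
antiderivative of `P_n` vanishing at `-1`. Since `Q_n` has degree `n + 1`, orthogonality of `P_m`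
to polynomials of lower degree gives `A_{mn} = 0` for `m > n + 1`. Integrating `(Q_m Q_n)'` gives
`A_{mn} + A_{nm} = Q_m(1) Q_n(1)`, and `Q_n(1) = ∫ P_n = 2 δ_{n0}`; this settles all cases except
`A_{n+1,n}`, which is the leading coefficient of `Q_n` times `∫ P_{n+1} x^{n+1}`, computed from
Rodrigues' formula by `n + 1` integrations by parts and
`∫_{-1}^1 (1 - x²)^n = 2^{2n+1} (n!)² / (2n+1)!`.
-/

open Polynomial

noncomputable section

open scoped Nat

namespace Polynomial

section Antideriv

variable {K : Type*} [Field K] [CharZero K]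

def antideriv (p : K[X]) : K[X] := p.sum fun k a => C (a / (k + 1)) * X ^ (k + 1)

@[simp]
lemma derivative_antideriv (p : K[X]) : derivative (antideriv p) = p := by
  conv_rhs => rw [← p.sum_C_mul_X_pow_eq]
  rw [antideriv, Polynomial.sum, Polynomial.sum, map_sum]
  refine Finset.sum_congr rfl fun k _ => ?_
  rw [derivative_C_mul_X_pow, Nat.add_sub_cancel, Nat.cast_add_one,
    div_mul_cancel₀ _ (Nat.cast_add_one_ne_zero k)]

lemma coeff_succ_of_derivative_eq {p q : K[X]} (h : derivative q = p) (k : ℕ) :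
    q.coeff (k + 1) = p.coeff k / (k + 1) := by
  rw [← h, coeff_derivative, mul_div_cancel_right₀ _ (Nat.cast_add_one_ne_zero k)]

lemma natDegree_le_of_derivative_eq {p q : K[X]} (h : derivative q = p) :
    q.natDegree ≤ p.natDegree + 1 := by
  rw [← h, natDegree_derivative]
  omega

end Antideriv

lemma iterate_derivative_eq_C_of_natDegree_le {R : Type*} [Semiring R] {q : R[X]} {n : ℕ}
    (h : q.natDegree ≤ n) : derivative^[n] q = C (n ! * q.coeff n) := by
  rw [eq_C_of_natDegree_le_zero ((natDegree_iterate_derivative q n).trans (by omega)),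
    coeff_iterate_derivative, zero_add, Nat.descFactorial_self, nsmul_eq_mul]

lemma eval_iterate_derivative_X_sq_sub_one_pow {R : Type*} [CommRing R] {n k : ℕ} (hk : k < n)
    {x : R} (hx : x ^ 2 = 1) : (derivative^[k] ((X ^ 2 - 1 : R[X]) ^ n)).eval x = 0 := by
  obtain ⟨r, hr⟩ := pow_sub_dvd_iterate_derivative_pow (X ^ 2 - 1 : R[X]) n k
  rw [hr, eval_mul, eval_pow]
  simp [hx, Nat.sub_ne_zero_of_lt hk]

lemma iteratedDeriv_eval (p : ℝ[X]) (n : ℕ) :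
    iteratedDeriv n (fun x => p.eval x) = fun x => (derivative^[n] p).eval x := by
  induction n with
  | zero => simp
  | succ n ih =>
    funext x
    rw [iteratedDeriv_succ, ih, Function.iterate_succ_apply', Polynomial.deriv]

lemma integral_eval_derivative (p : ℝ[X]) (a b : ℝ) :
    ∫ x in a..b, (derivative p).eval x = p.eval b - p.eval a :=
  intervalIntegral.integral_eq_sub_of_hasDerivAt (fun x _ => p.hasDerivAt x)
    (p.derivative.continuous.intervalIntegrable a b)

lemma integral_eval_derivative_mul (p q : ℝ[X]) (a b : ℝ) :
    ∫ x in a..b, (derivative p).eval x * q.eval x =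
      p.eval b * q.eval b - p.eval a * q.eval a -
        ∫ x in a..b, p.eval x * (derivative q).eval x := by
  have := intervalIntegral.integral_mul_deriv_eq_deriv_mul (fun x _ => q.hasDerivAt x)
    (fun x _ => p.hasDerivAt x) (q.derivative.continuous.intervalIntegrable a b)
    (p.derivative.continuous.intervalIntegrable a b)
  simp only [mul_comm (eval _ q), mul_comm (eval _ (derivative q))] at this
  exact this

lemma integral_eval_iterate_derivative_mul {f : ℝ[X]} {a b : ℝ} {n : ℕ}
    (hf : ∀ k < n, (derivative^[k] f).eval a = 0 ∧ (derivative^[k] f).eval b = 0) (q : ℝ[X]) :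
    ∫ x in a..b, (derivative^[n] f).eval x * q.eval x =
      (-1) ^ n * ∫ x in a..b, f.eval x * (derivative^[n] q).eval x := by
  induction n generalizing q with
  | zero => simp
  | succ n ih =>
    obtain ⟨ha, hb⟩ := hf n n.lt_succ_self
    rw [Function.iterate_succ_apply', integral_eval_derivative_mul, ha, hb,
      ih (fun k hk => hf k (by omega)), Function.iterate_succ_apply]
    ring

end Polynomial

lemma integral_one_sub_sq_pow_succ (n : ℕ) :
    (2 * n + 3 : ℝ) * ∫ x in (-1 : ℝ)..1, (1 - x ^ 2) ^ (n + 1) =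
      (2 * n + 2 : ℝ) * ∫ x in (-1 : ℝ)..1, (1 - x ^ 2) ^ n := by
  have hderiv : ∀ x : ℝ, HasDerivAt (fun x => x * (1 - x ^ 2) ^ (n + 1))
      ((2 * n + 3) * (1 - x ^ 2) ^ (n + 1) - (2 * n + 2) * (1 - x ^ 2) ^ n) x := by
    intro x
    refine ((hasDerivAt_id' x).fun_mul
      (((hasDerivAt_pow 2 x).const_sub 1).fun_pow (n + 1))).congr_deriv ?_
    rw [Nat.add_sub_cancel]
    push_cast
    ring
  have hint : ∀ k : ℕ, IntervalIntegrable (fun x : ℝ => (1 - x ^ 2) ^ k) volume (-1) 1 :=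
    fun k => (by fun_prop : Continuous fun x : ℝ => (1 - x ^ 2) ^ k).intervalIntegrable _ _
  have := intervalIntegral.integral_eq_sub_of_hasDerivAt (fun x _ => hderiv x)
    (((hint (n + 1)).const_mul _).sub ((hint n).const_mul _))
  rw [intervalIntegral.integral_sub ((hint (n + 1)).const_mul _) ((hint n).const_mul _),
    intervalIntegral.integral_const_mul, intervalIntegral.integral_const_mul] at this
  norm_num at this
  linarith

lemma integral_one_sub_sq_pow (n : ℕ) :
    ∫ x in (-1 : ℝ)..1, (1 - x ^ 2) ^ n = 2 ^ (2 * n + 1) * (n ! : ℝ) ^ 2 / (2 * n + 1)! := by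
  induction n with
  | zero => norm_num
  | succ n ih =>
    have h := integral_one_sub_sq_pow_succ n
    rw [ih] at h
    rw [show 2 * (n + 1) + 1 = 2 * n + 1 + 1 + 1 by ring, Nat.factorial_succ, Nat.factorial_succ,
      Nat.factorial_succ]
    field_simp at h ⊢
    push_cast at h ⊢
    linear_combination (2 * (n : ℝ) + 2) * h

lemma monic_X_sq_sub_one {R : Type*} [CommRing R] [Nontrivial R] :
    (X ^ 2 - 1 : R[X]).Monic := by
  simpa using monic_X_pow_sub_C (1 : R) two_ne_zero

lemma natDegree_X_sq_sub_one_pow {R : Type*} [CommRing R] [Nontrivial R] (n : ℕ) :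
    ((X ^ 2 - 1 : R[X]) ^ n).natDegree = 2 * n := by
  have h : (X ^ 2 - 1 : R[X]).natDegree = 2 := by
    simpa using natDegree_X_pow_sub_C (n := 2) (r := (1 : R))
  rw [monic_X_sq_sub_one.natDegree_pow, h, mul_comm]

def legendre (n : ℕ) : ℝ[X] :=
  C (1 / ((2 : ℝ) ^ n * n !)) * derivative^[n] ((X ^ 2 - 1 : ℝ[X]) ^ n)

lemma legendreP_eq_eval_legendre (n : ℕ) (x : ℝ) : legendreP n x = (legendre n).eval x := by
  have h : (fun y : ℝ => (y ^ 2 - 1) ^ n) = fun y => ((X ^ 2 - 1 : ℝ[X]) ^ n).eval y := by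
    simp
  rw [legendreP, legendre, h, iteratedDeriv_eval, eval_mul, eval_C]

lemma natDegree_legendre_le (n : ℕ) : (legendre n).natDegree ≤ n := by
  refine (natDegree_C_mul_le _ _).trans ((natDegree_iterate_derivative _ _).trans ?_)
  rw [natDegree_X_sq_sub_one_pow]
  omega

lemma coeff_legendre_self (n : ℕ) :
    (legendre n).coeff n = (2 * n)! / (2 ^ n * (n ! : ℝ) ^ 2) := by
  have hdeg := natDegree_X_sq_sub_one_pow (R := ℝ) n
  have hdesc : (2 * n).descFactorial n * n ! = (2 * n)! := by
    rw [mul_comm, ← Nat.factorial_mul_descFactorial (show n ≤ 2 * n by omega),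
      show 2 * n - n = n by omega]
  rw [legendre, coeff_C_mul, coeff_iterate_derivative, ← two_mul, ← hdeg, coeff_natDegree,
    (monic_X_sq_sub_one.pow n).leadingCoeff, hdeg, nsmul_eq_mul, mul_one, ← hdesc]
  push_cast
  field_simp

/-- After Rodrigues' formula and `n` integrations by parts, whose boundary terms vanish because
`±1` are roots of order `n` of `(X² - 1)ⁿ`, this is `q_n n! ∫_{-1}^1 (1 - x²)ⁿ`. -/
lemma integral_legendre_mul {n : ℕ} {q : ℝ[X]} (hq : q.natDegree ≤ n) :
    ∫ x in (-1 : ℝ)..1, (legendre n).eval x * q.eval x =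
      q.coeff n * (2 ^ (n + 1) * (n ! : ℝ) ^ 2 / (2 * n + 1)!) := by
  have hvanish : ∀ k < n, (derivative^[k] ((X ^ 2 - 1 : ℝ[X]) ^ n)).eval (-1) = 0 ∧
      (derivative^[k] ((X ^ 2 - 1 : ℝ[X]) ^ n)).eval 1 = 0 := fun k hk =>
    ⟨eval_iterate_derivative_X_sq_sub_one_pow hk (by norm_num),
      eval_iterate_derivative_X_sq_sub_one_pow hk (by norm_num)⟩
  simp only [legendre, eval_mul, eval_C, mul_assoc]
  rw [intervalIntegral.integral_const_mul, integral_eval_iterate_derivative_mul hvanish,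
    iterate_derivative_eq_C_of_natDegree_le hq]
  have hsign : ∀ x : ℝ,
      (-1) ^ n * (((X ^ 2 - 1 : ℝ[X]) ^ n).eval x * (C (n ! * q.coeff n)).eval x) =
        n ! * q.coeff n * (1 - x ^ 2) ^ n := by
    intro x
    simp only [eval_pow, eval_sub, eval_X, eval_one, eval_C]
    rw [show 1 - x ^ 2 = -1 * (x ^ 2 - 1) by ring, mul_pow]
    ring
  rw [← intervalIntegral.integral_const_mul]
  simp only [hsign]
  rw [intervalIntegral.integral_const_mul, integral_one_sub_sq_pow]
  field_simp
  ring

def legendreAntideriv (n : ℕ) : ℝ[X] :=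
  antideriv (legendre n) - C ((antideriv (legendre n)).eval (-1))

@[simp]
lemma derivative_legendreAntideriv (n : ℕ) : derivative (legendreAntideriv n) = legendre n := by
  simp [legendreAntideriv]

@[simp]
lemma legendreAntideriv_eval_neg_one (n : ℕ) : (legendreAntideriv n).eval (-1) = 0 := by
  simp [legendreAntideriv]

lemma integral_legendre (n : ℕ) (y : ℝ) :
    ∫ x in (-1 : ℝ)..y, (legendre n).eval x = (legendreAntideriv n).eval y := by
  simpa using integral_eval_derivative (legendreAntideriv n) (-1) y

lemma legendreAntideriv_eval_one (n : ℕ) :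
    (legendreAntideriv n).eval 1 = if n = 0 then 2 else 0 := by
  have h := integral_legendre_mul (q := 1) (n := n) (by simp)
  simp only [eval_one, mul_one, coeff_one] at h
  rw [← integral_legendre, h]
  split_ifs with hn
  · subst hn
    norm_num
  · rw [zero_mul]

/-- `∫_{-1}^1 P_m(y) ∫_{-1}^y P_n(x) dx dy`, the coefficient `C_{mn}` for `[t, T] = [-1, 1]`
up to normalisation. -/
def legendreDoubleIntegral (m n : ℕ) : ℝ :=
  ∫ x in (-1 : ℝ)..1, (legendre m).eval x * (legendreAntideriv n).eval x

lemma legendreDoubleIntegral_add_swap (m n : ℕ) :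
    legendreDoubleIntegral m n + legendreDoubleIntegral n m =
      (legendreAntideriv m).eval 1 * (legendreAntideriv n).eval 1 := by
  have h := integral_eval_derivative_mul (legendreAntideriv m) (legendreAntideriv n) (-1) 1
  simp only [derivative_legendreAntideriv, legendreAntideriv_eval_neg_one, zero_mul,
    sub_zero] at h
  rw [legendreDoubleIntegral, legendreDoubleIntegral, h]
  simp only [mul_comm (eval _ (legendreAntideriv m))]
  ring

lemma legendreDoubleIntegral_eq_zero_of_lt {m n : ℕ} (h : n + 1 < m) :
    legendreDoubleIntegral m n = 0 := by
  have hdeg : (legendreAntideriv n).natDegree < m :=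
    (natDegree_le_of_derivative_eq (derivative_legendreAntideriv n)).trans_lt
      (by have := natDegree_legendre_le n; omega)
  rw [legendreDoubleIntegral, integral_legendre_mul hdeg.le, coeff_eq_zero_of_natDegree_lt hdeg,
    zero_mul]

lemma legendreDoubleIntegral_eq_zero_of_gt {m n : ℕ} (h : m + 1 < n) :
    legendreDoubleIntegral m n = 0 := by
  have hswap := legendreDoubleIntegral_add_swap m n
  rw [legendreDoubleIntegral_eq_zero_of_lt h, legendreAntideriv_eval_one n, if_neg (by omega),
    mul_zero] at hswap
  linarith

lemma legendreDoubleIntegral_self {n : ℕ} (hn : n ≠ 0) : legendreDoubleIntegral n n = 0 := by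
  have h := legendreDoubleIntegral_add_swap n n
  rw [legendreAntideriv_eval_one, if_neg hn, zero_mul] at h
  linarith

lemma legendreDoubleIntegral_zero_zero : legendreDoubleIntegral 0 0 = 2 := by
  have h := legendreDoubleIntegral_add_swap 0 0
  rw [legendreAntideriv_eval_one, if_pos rfl] at h
  linarith

lemma legendreDoubleIntegral_succ_self (n : ℕ) :
    legendreDoubleIntegral (n + 1) n = 2 / ((2 * n + 1) * (2 * n + 3)) := by
  have hdeg : (legendreAntideriv n).natDegree ≤ n + 1 :=
    (natDegree_le_of_derivative_eq (derivative_legendreAntideriv n)).trans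
      (by have := natDegree_legendre_le n; omega)
  rw [legendreDoubleIntegral, integral_legendre_mul hdeg,
    coeff_succ_of_derivative_eq (derivative_legendreAntideriv n), coeff_legendre_self,
    show 2 * (n + 1) + 1 = 2 * n + 1 + 1 + 1 by ring, Nat.factorial_succ, Nat.factorial_succ,
    Nat.factorial_succ, Nat.factorial_succ]
  push_cast
  field_simp
  ring

lemma legendreDoubleIntegral_self_succ (n : ℕ) :
    legendreDoubleIntegral n (n + 1) = -legendreDoubleIntegral (n + 1) n := by
  have h := legendreDoubleIntegral_add_swap n (n + 1)
  rw [legendreAntideriv_eval_one (n + 1), if_neg n.succ_ne_zero, mul_zero] at h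
  linarith

lemma sqrt_mul_sqrt_mul_legendreDoubleIntegral_succ_self (n : ℕ) :
    √(2 * (n + 1 : ℕ) + 1) * √(2 * n + 1) * legendreDoubleIntegral (n + 1) n =
      2 / √(4 * ((n + 1 : ℕ) : ℝ) ^ 2 - 1) := by
  have ha : (0 : ℝ) < 2 * n + 1 := by positivity
  rw [legendreDoubleIntegral_succ_self]
  push_cast
  rw [show 4 * ((n : ℝ) + 1) ^ 2 - 1 = (2 * n + 1) * (2 * n + 3) by ring,
    show 2 * ((n : ℝ) + 1) + 1 = 2 * n + 3 by ring, Real.sqrt_mul ha.le]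
  field_simp
  rw [Real.sq_sqrt ha.le, Real.sq_sqrt (by positivity)]

end

lemma integral_comp_rescale (f : ℝ → ℝ) {t T : ℝ} (h : t ≠ T) (a b : ℝ) :
    ∫ x in a..b, f ((2 * (x - t) - (T - t)) / (T - t)) =
      (T - t) / 2 *
        ∫ u in (2 * (a - t) - (T - t)) / (T - t)..(2 * (b - t) - (T - t)) / (T - t), f u := by
  have hΔ : T - t ≠ 0 := sub_ne_zero.2 h.symm
  have hψ : ∀ x, (2 * (x - t) - (T - t)) / (T - t) = 2 / (T - t) * x + -(T + t) / (T - t) :=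
    fun x => by field_simp; ring
  simp only [hψ]
  rw [intervalIntegral.integral_comp_mul_add f (div_ne_zero two_ne_zero hΔ), smul_eq_mul, inv_div]

lemma integral_rescaled_legendre_mul_integral {t T : ℝ} (ht : t < T) (m n : ℕ) :
    (∫ y in t..T, √((2 * m + 1) / (T - t)) *
        (legendre m).eval ((2 * (y - t) - (T - t)) / (T - t)) *
      ∫ x in t..y, √((2 * n + 1) / (T - t)) *
        (legendre n).eval ((2 * (x - t) - (T - t)) / (T - t))) =
      (T - t) / 4 * (√(2 * m + 1) * √(2 * n + 1) * legendreDoubleIntegral m n) := by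
  have hΔ : 0 < T - t := sub_pos.2 ht
  have hψt : (2 * (t - t) - (T - t)) / (T - t) = -1 := by field_simp; ring
  have hψT : (2 * (T - t) - (T - t)) / (T - t) = 1 := by field_simp; ring
  have hinner : ∀ y, ∫ x in t..y, √((2 * n + 1) / (T - t)) *
      (legendre n).eval ((2 * (x - t) - (T - t)) / (T - t)) =
      √((2 * n + 1) / (T - t)) * ((T - t) / 2 *
        (legendreAntideriv n).eval ((2 * (y - t) - (T - t)) / (T - t))) := fun y => by
    rw [intervalIntegral.integral_const_mul,
      integral_comp_rescale (fun u => (legendre n).eval u) ht.ne, hψt, integral_legendre]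
  simp only [hinner]
  calc _ = √((2 * m + 1) / (T - t)) * √((2 * n + 1) / (T - t)) * ((T - t) / 2) *
        ∫ y in t..T, (fun u => (legendre m).eval u * (legendreAntideriv n).eval u)
          ((2 * (y - t) - (T - t)) / (T - t)) := by
        rw [← intervalIntegral.integral_const_mul]
        congr 1
        ext y
        ring
    _ = √((2 * m + 1) / (T - t)) * √((2 * n + 1) / (T - t)) * ((T - t) / 2) *
        ((T - t) / 2 * legendreDoubleIntegral m n) := by
        rw [integral_comp_rescale (fun u => (legendre m).eval u * (legendreAntideriv n).eval u)
          ht.ne, hψt, hψT, legendreDoubleIntegral]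
    _ = _ := by
        rw [Real.sqrt_div' _ hΔ.le, Real.sqrt_div' _ hΔ.le]
        field_simp
        rw [Real.sq_sqrt hΔ.le]
        ring

/-- The Fourier–Legendre coefficients `C_{j₂j₁} = ∫_t^T φ_{j₂}(y) ∫_t^y φ_{j₁}(x) dx dy`
of the kernel of the double stochastic integral `I₀₀`: `C₀₀ = Δ/2`,
`C_{j,j−1} = Δ/(2√(4j²−1))`, `C_{j−1,j} = −Δ/(2√(4j²−1))` for `j ≥ 1`, and all
remaining coefficients vanish. -/
theorem stmt_10 (t T : ℝ) (ht : t < T)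
    (φ : ℕ → ℝ → ℝ)
    (hφ : ∀ (n : ℕ) (x : ℝ), φ n x =
      Real.sqrt ((2 * (n : ℝ) + 1) / (T - t)) *
        legendreP n ((2 * (x - t) - (T - t)) / (T - t)))
    (C : ℕ → ℕ → ℝ)
    (hC : ∀ j2 j1 : ℕ, C j2 j1 = ∫ y in t..T, φ j2 y * ∫ x in t..y, φ j1 x) :
    C 0 0 = (T - t) / 2 ∧
    (∀ j : ℕ, 1 ≤ j →
      C j (j - 1) = (T - t) / (2 * Real.sqrt (4 * (j : ℝ) ^ 2 - 1)) ∧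
      C (j - 1) j = -((T - t) / (2 * Real.sqrt (4 * (j : ℝ) ^ 2 - 1)))) ∧
    (∀ j1 j2 : ℕ, (j1 + 2 ≤ j2 ∨ j2 + 2 ≤ j1 ∨ (j1 = j2 ∧ 1 ≤ j1)) → C j2 j1 = 0) := by
  have hC' : ∀ m n : ℕ, C m n =
      (T - t) / 4 * (√(2 * m + 1) * √(2 * n + 1) * legendreDoubleIntegral m n) := fun m n => by
    simp only [hC, hφ, legendreP_eq_eval_legendre]
    exact integral_rescaled_legendre_mul_integral ht m n
  refine ⟨?_, fun j hj => ?_, fun j1 j2 h => ?_⟩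
  · rw [hC', legendreDoubleIntegral_zero_zero]
    norm_num
    ring
  · obtain ⟨n, rfl⟩ := Nat.exists_eq_add_of_le' hj
    have h := sqrt_mul_sqrt_mul_legendreDoubleIntegral_succ_self n
    rw [Nat.add_sub_cancel, hC', hC', legendreDoubleIntegral_self_succ]
    constructor
    · linear_combination (T - t) / 4 * h
    · linear_combination -(T - t) / 4 * h
  · rw [hC']
    rcases h with h | h | ⟨rfl, h⟩
    · rw [legendreDoubleIntegral_eq_zero_of_lt (by omega), mul_zero, mul_zero]
    · rw [legendreDoubleIntegral_eq_zero_of_gt (by omega), mul_zero, mul_zero]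
    · rw [legendreDoubleIntegral_self (by omega), mul_zero, mul_zero]
end

section
/- The following identity of convergent series of real numbers holds: 2·Σ_{i=2}^{∞} 1/(4i²−1) + Σ_{i=1}^{∞} 1/((2i−1)²(2i+3)²) + Σ_{i=0}^{∞} ((i+2)² + (i+1)²)/((2i+1)(2i+5)(2i+3)²) = 5/9. -/
/-!
The first series telescopes: `1/(4(i+2)² − 1) = ½(1/(2i+3) − 1/(2i+5))`, so it sums to `1/6`.
The second and third series do not telescope separately, but their termwise sum does,
with the potential `v n = (x₀² − x₁²)/16 + (x₀ + x₁)/8`, `x_k = 1/(2n+2k+1)`, and `v 0 = 2/9`.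
Hence the total is `2·(1/6) + 2/9 = 5/9`.
-/

open Filter Topology

lemma hasSum_sub_succ_of_antitone {u : ℕ → ℝ} {l : ℝ} (hu : Antitone u)
    (hl : Tendsto u atTop (𝓝 l)) : HasSum (fun n => u n - u (n + 1)) (u 0 - l) := by
  rw [hasSum_iff_tendsto_nat_of_nonneg fun n => sub_nonneg.2 (hu n.le_succ)]
  simp_rw [Finset.sum_range_sub']
  exact tendsto_const_nhds.sub hl

lemma tsum_add_tsum_of_hasSum_add {ι : Type*} {f g : ι → ℝ} {a : ℝ} (hf : ∀ i, 0 ≤ f i)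
    (hg : ∀ i, 0 ≤ g i) (h : HasSum (fun i => f i + g i) a) : ∑' i, f i + ∑' i, g i = a := by
  have hfg := h.summable
  rw [← (hfg.of_nonneg_of_le hf fun i => le_add_of_nonneg_right (hg i)).tsum_add
    (hfg.of_nonneg_of_le hg fun i => le_add_of_nonneg_left (hf i)), h.tsum_eq]

lemma tendsto_inv_mul_natCast_add_atTop {a : ℝ} (ha : 0 < a) (b : ℝ) :
    Tendsto (fun n : ℕ => (a * n + b)⁻¹) atTop (𝓝 0) :=
  (tendsto_atTop_add_const_right _ b
    (tendsto_natCast_atTop_atTop.const_mul_atTop ha)).inv_tendsto_atTop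

lemma hasSum_one_div_four_mul_sq_sub_one :
    HasSum (fun i : ℕ => (1 : ℝ) / (4 * ((i : ℝ) + 2) ^ 2 - 1)) (1 / 6) := by
  have h := hasSum_sub_succ_of_antitone (u := fun n : ℕ => (2 * (n : ℝ) + 3)⁻¹ / 2)
    (fun m n hmn => by dsimp only; gcongr) ((tendsto_inv_mul_natCast_add_atTop two_pos 3).div_const 2)
  convert h using 1
  · funext n
    have h3 : (2 * (n : ℝ) + 3) ≠ 0 := by positivity
    have h5 : (2 * (n : ℝ) + 5) ≠ 0 := by positivity
    rw [show 4 * ((n : ℝ) + 2) ^ 2 - 1 = (2 * n + 3) * (2 * n + 5) by ring]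
    push_cast
    field_simp
    ring
  · norm_num

lemma hasSum_one_div_sq_mul_sq_add_sum_sq_div :
    HasSum (fun i : ℕ => (1 : ℝ) / ((2 * ((i : ℝ) + 1) - 1) ^ 2 * (2 * ((i : ℝ) + 1) + 3) ^ 2)
      + (((i : ℝ) + 2) ^ 2 + ((i : ℝ) + 1) ^ 2) /
          ((2 * (i : ℝ) + 1) * (2 * (i : ℝ) + 5) * (2 * (i : ℝ) + 3) ^ 2)) (2 / 9) := by
  set v : ℕ → ℝ := fun n => ((2 * (n : ℝ) + 1)⁻¹ ^ 2 - (2 * (n : ℝ) + 3)⁻¹ ^ 2) / 16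
    + ((2 * (n : ℝ) + 1)⁻¹ + (2 * (n : ℝ) + 3)⁻¹) / 8 with hv
  have key : ∀ n : ℕ, (1 : ℝ) / ((2 * ((n : ℝ) + 1) - 1) ^ 2 * (2 * ((n : ℝ) + 1) + 3) ^ 2)
      + (((n : ℝ) + 2) ^ 2 + ((n : ℝ) + 1) ^ 2) /
          ((2 * (n : ℝ) + 1) * (2 * (n : ℝ) + 5) * (2 * (n : ℝ) + 3) ^ 2) = v n - v (n + 1) := by
    intro n
    have h1 : (2 * (n : ℝ) + 1) ≠ 0 := by positivity
    have h3 : (2 * (n : ℝ) + 3) ≠ 0 := by positivity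
    have h5 : (2 * (n : ℝ) + 5) ≠ 0 := by positivity
    have e1 : 2 * ((n : ℝ) + 1) - 1 = 2 * n + 1 := by ring
    have e3 : 2 * ((n : ℝ) + 1) + 1 = 2 * n + 3 := by ring
    have e5 : 2 * ((n : ℝ) + 1) + 3 = 2 * n + 5 := by ring
    simp only [hv, Nat.cast_add_one, e1, e3, e5]
    field_simp
    ring
  have hlim : Tendsto v atTop (𝓝 0) := by
    have h1 := tendsto_inv_mul_natCast_add_atTop two_pos 1
    have h3 := tendsto_inv_mul_natCast_add_atTop two_pos 3
    simpa [hv] using (((h1.pow 2).sub (h3.pow 2)).div_const 16).add ((h1.add h3).div_const 8)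
  have hanti : Antitone v := antitone_nat_of_succ_le fun n =>
    sub_nonneg.1 (key n ▸ by positivity)
  convert hasSum_sub_succ_of_antitone hanti hlim using 1
  · exact funext key
  · norm_num [hv]

/-- Identity of convergent series:
`2·Σ_{i=2}^∞ 1/(4i²−1) + Σ_{i=1}^∞ 1/((2i−1)²(2i+3)²)
  + Σ_{i=0}^∞ ((i+2)²+(i+1)²)/((2i+1)(2i+5)(2i+3)²) = 5/9`. -/
theorem stmt_15 :
    2 * (∑' i : ℕ, (1 : ℝ) / (4 * ((i : ℝ) + 2) ^ 2 - 1))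
      + (∑' i : ℕ, (1 : ℝ) /
          ((2 * ((i : ℝ) + 1) - 1) ^ 2 * (2 * ((i : ℝ) + 1) + 3) ^ 2))
      + (∑' i : ℕ, (((i : ℝ) + 2) ^ 2 + ((i : ℝ) + 1) ^ 2) /
          ((2 * (i : ℝ) + 1) * (2 * (i : ℝ) + 5) * (2 * (i : ℝ) + 3) ^ 2))
      = 5 / 9 := by
  rw [hasSum_one_div_four_mul_sq_sub_one.tsum_eq, add_assoc,
    tsum_add_tsum_of_hasSum_add (fun i => by positivity) (fun i => by positivity)
      hasSum_one_div_sq_mul_sq_add_sum_sq_div]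
  norm_num
end
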